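/- arXiv:2306.13545 — 2 statements merged into one kernel-verified Lean document; each statement's English description precedes it below -/
import Mathlib

section
/- Let U ⊆ ℂ be an open set and let f, g : ℂ → ℂ be complex differentiable on U (holomorphic). Define ψ : ℂ → ℝ by ψ(z) = Im(conj(z)·f(z) + g(z)). Then ψ, viewed as a function of the real variables x = Re z and y = Im z, satisfies the biharmonic equation on U: ∂⁴ψ/∂x⁴ + 2 ∂⁴ψ/∂x²∂y² + ∂⁴ψ/∂y⁴ = 0. -/
open Complex

/-- Partial derivative along the real direction of a real-valued function on ℂ. -/
noncomputable def pdx (f : ℂ → ℝ) (z : ℂ) : ℝ := fderiv ℝ f z 1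

/-- Partial derivative along the imaginary direction of a real-valued function on ℂ. -/
noncomputable def pdy (f : ℂ → ℝ) (z : ℂ) : ℝ := fderiv ℝ f z Complex.I

noncomputable def Phi (F G : ℂ → ℂ) : ℂ → ℝ := fun w => ((starRingEnd ℂ) w * F w + G w).im

lemma fderivPhi (F G : ℂ → ℂ) (z : ℂ) (hF : DifferentiableAt ℂ F z) (hG : DifferentiableAt ℂ G z) (v : ℂ) :
    fderiv ℝ (Phi F G) z v = ((starRingEnd ℂ) z * (v * deriv F z) + ((starRingEnd ℂ) v * F z + v * deriv G z)).im := by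
  have hF' := (hF.hasDerivAt.hasFDerivAt.restrictScalars ℝ)
  have hG' := (hG.hasDerivAt.hasFDerivAt.restrictScalars ℝ)
  have hc : HasFDerivAt (fun w : ℂ => (starRingEnd ℂ) w) (Complex.conjCLE.toContinuousLinearMap) z :=
    Complex.conjCLE.hasFDerivAt
  have hadd := (hc.mul' hF').add hG'
  have him := (Complex.imCLM.hasFDerivAt (x := (starRingEnd ℂ) z * F z + G z)).comp z hadd
  have heq : fderiv ℝ (Phi F G) z = _ := him.fderiv
  rw [heq]
  simp [ContinuousLinearMap.smulRight_apply, smul_eq_mul, mul_comm]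
  ring

lemma pdx_congrU {U : Set ℂ} (hU : IsOpen U) {a b : ℂ → ℝ} (h : ∀ w ∈ U, a w = b w) {z : ℂ} (hz : z ∈ U) :
    pdx a z = pdx b z := by
  unfold pdx
  rw [Filter.EventuallyEq.fderiv_eq (Filter.eventuallyEq_of_mem (hU.mem_nhds hz) h)]

lemma pdy_congrU {U : Set ℂ} (hU : IsOpen U) {a b : ℂ → ℝ} (h : ∀ w ∈ U, a w = b w) {z : ℂ} (hz : z ∈ U) :
    pdy a z = pdy b z := by
  unfold pdy
  rw [Filter.EventuallyEq.fderiv_eq (Filter.eventuallyEq_of_mem (hU.mem_nhds hz) h)]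

lemma pdx_step {U : Set ℂ} (hU : IsOpen U) {F G : ℂ → ℂ} {ψ' : ℂ → ℝ}
    (hF : DifferentiableOn ℂ F U) (hG : DifferentiableOn ℂ G U)
    (hprev : ∀ w ∈ U, ψ' w = Phi F G w) :
    ∀ z ∈ U, pdx ψ' z = Phi (deriv F) (fun w => F w + deriv G w) z := by
  intro z hz
  rw [pdx_congrU hU hprev hz]
  unfold pdx
  rw [fderivPhi F G z (hF.differentiableAt (hU.mem_nhds hz)) (hG.differentiableAt (hU.mem_nhds hz)) 1]
  unfold Phi
  congr 1
  simp

lemma pdy_step {U : Set ℂ} (hU : IsOpen U) {F G : ℂ → ℂ} {ψ' : ℂ → ℝ}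
    (hF : DifferentiableOn ℂ F U) (hG : DifferentiableOn ℂ G U)
    (hprev : ∀ w ∈ U, ψ' w = Phi F G w) :
    ∀ z ∈ U, pdy ψ' z = Phi (fun w => I * deriv F w) (fun w => I * deriv G w - I * F w) z := by
  intro z hz
  rw [pdy_congrU hU hprev hz]
  unfold pdy
  rw [fderivPhi F G z (hF.differentiableAt (hU.mem_nhds hz)) (hG.differentiableAt (hU.mem_nhds hz)) I]
  unfold Phi
  congr 1
  rw [Complex.conj_I]
  ring

/-- The Goursat representation `ψ = Im[conj(z) f(z) + g(z)]` with `f`, `g`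
holomorphic is biharmonic. -/
theorem goursat_biharmonic
    (U : Set ℂ) (hU : IsOpen U) (f g : ℂ → ℂ)
    (hf : DifferentiableOn ℂ f U) (hg : DifferentiableOn ℂ g U)
    (ψ : ℂ → ℝ) (hψ : ∀ z, ψ z = ((starRingEnd ℂ) z * f z + g z).im) :
    ∀ z ∈ U,
      pdx (pdx (pdx (pdx ψ))) z + 2 * pdx (pdx (pdy (pdy ψ))) z
        + pdy (pdy (pdy (pdy ψ))) z = 0 := by
  have Af : AnalyticOnNhd ℂ f U := hf.analyticOnNhd hU
  have Ag : AnalyticOnNhd ℂ g U := hg.analyticOnNhd hU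
  have Df1 : DifferentiableOn ℂ (deriv f) U := Af.deriv.differentiableOn
  have Df2 : DifferentiableOn ℂ (deriv (deriv f)) U := Af.deriv.deriv.differentiableOn
  have Df3 : DifferentiableOn ℂ (deriv (deriv (deriv f))) U := Af.deriv.deriv.deriv.differentiableOn
  have Dg1 : DifferentiableOn ℂ (deriv g) U := Ag.deriv.differentiableOn
  have Dg2 : DifferentiableOn ℂ (deriv (deriv g)) U := Ag.deriv.deriv.differentiableOn
  have Dg3 : DifferentiableOn ℂ (deriv (deriv (deriv g))) U := Ag.deriv.deriv.deriv.differentiableOn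
  have df : ∀ {w}, w ∈ U → DifferentiableAt ℂ f w := fun hw => hf.differentiableAt (hU.mem_nhds hw)
  have df1 : ∀ {w}, w ∈ U → DifferentiableAt ℂ (deriv f) w := fun hw => Df1.differentiableAt (hU.mem_nhds hw)
  have df2 : ∀ {w}, w ∈ U → DifferentiableAt ℂ (deriv (deriv f)) w := fun hw => Df2.differentiableAt (hU.mem_nhds hw)
  have df3 : ∀ {w}, w ∈ U → DifferentiableAt ℂ (deriv (deriv (deriv f))) w := fun hw => Df3.differentiableAt (hU.mem_nhds hw)
  have dg1 : ∀ {w}, w ∈ U → DifferentiableAt ℂ (deriv g) w := fun hw => Dg1.differentiableAt (hU.mem_nhds hw)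
  have dg2 : ∀ {w}, w ∈ U → DifferentiableAt ℂ (deriv (deriv g)) w := fun hw => Dg2.differentiableAt (hU.mem_nhds hw)
  have dg3 : ∀ {w}, w ∈ U → DifferentiableAt ℂ (deriv (deriv (deriv g))) w := fun hw => Dg3.differentiableAt (hU.mem_nhds hw)
  have S0 : ∀ w ∈ U, ψ w = Phi f g w := fun w _ => hψ w
  -- X chain
  have S1 := pdx_step hU hf hg S0
  have S2 := pdx_step hU Df1 (hf.add Dg1) S1
  have S2' : ∀ w ∈ U, pdx (pdx ψ) w = Phi (deriv (deriv f))
      (fun w => 2 * deriv f w + deriv (deriv g) w) w := by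
    intro w hw
    rw [S2 w hw]
    simp only [Phi]
    congr 1
    rw [((df hw).hasDerivAt.add (dg1 hw).hasDerivAt).deriv]
    ring
  have S3 := pdx_step hU Df2 ((Df1.const_mul 2).add Dg2) S2'
  have S3' : ∀ w ∈ U, pdx (pdx (pdx ψ)) w = Phi (deriv (deriv (deriv f)))
      (fun w => 3 * deriv (deriv f) w + deriv (deriv (deriv g)) w) w := by
    intro w hw
    rw [S3 w hw]
    simp only [Phi]
    congr 1
    rw [(((df1 hw).hasDerivAt.const_mul 2).add (dg2 hw).hasDerivAt).deriv]
    ring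
  have S4 := pdx_step hU Df3 ((Df2.const_mul 3).add Dg3) S3'
  -- Y chain start
  have T1 := pdy_step hU hf hg S0
  have T2 := pdy_step hU (Df1.const_mul I) ((Dg1.const_mul I).sub (hf.const_mul I)) T1
  have T2' : ∀ w ∈ U, pdy (pdy ψ) w = Phi (fun w => -deriv (deriv f) w)
      (fun w => 2 * deriv f w - deriv (deriv g) w) w := by
    intro w hw
    rw [T2 w hw]
    simp only [Phi]
    congr 1
    rw [((df1 hw).hasDerivAt.const_mul I).deriv,
      (((dg1 hw).hasDerivAt.const_mul I).sub ((df hw).hasDerivAt.const_mul I)).deriv]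
    have hI : (I : ℂ) * I = -1 := Complex.I_mul_I
    linear_combination ((starRingEnd ℂ) w * deriv (deriv f) w + deriv (deriv g) w - 2 * deriv f w) * hI
  -- X² after Y²
  have T3 := pdx_step hU Df2.neg ((Df1.const_mul 2).sub Dg2) T2'
  have T3' : ∀ w ∈ U, pdx (pdy (pdy ψ)) w = Phi (fun w => -deriv (deriv (deriv f)) w)
      (fun w => deriv (deriv f) w - deriv (deriv (deriv g)) w) w := by
    intro w hw
    rw [T3 w hw]
    simp only [Phi]
    congr 1
    rw [(df2 hw).hasDerivAt.neg.deriv,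
      (((df1 hw).hasDerivAt.const_mul 2).sub (dg2 hw).hasDerivAt).deriv]
    simp only [Pi.neg_apply]
    ring
  have T4 := pdx_step hU Df3.neg (Df2.sub Dg3) T3'
  -- Y⁴
  have U3 := pdy_step hU Df2.neg ((Df1.const_mul 2).sub Dg2) T2'
  have U3' : ∀ w ∈ U, pdy (pdy (pdy ψ)) w = Phi (fun w => -(I * deriv (deriv (deriv f)) w))
      (fun w => 3 * (I * deriv (deriv f) w) - I * deriv (deriv (deriv g)) w) w := by
    intro w hw
    rw [U3 w hw]
    simp only [Phi]
    congr 1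
    rw [(df2 hw).hasDerivAt.neg.deriv,
      (((df1 hw).hasDerivAt.const_mul 2).sub (dg2 hw).hasDerivAt).deriv]
    simp only [Pi.neg_apply]
    ring
  have U4 := pdy_step hU ((Df3.const_mul I).neg) (((Df2.const_mul I).const_mul 3).sub (Dg3.const_mul I)) U3'
  -- final evaluation
  intro z hz
  rw [S4 z hz, T4 z hz, U4 z hz]
  simp only [Phi]
  rw [(((df2 hz).hasDerivAt.const_mul 3).add (dg3 hz).hasDerivAt).deriv,
    ((df3 hz).hasDerivAt.neg).deriv,
    ((df2 hz).hasDerivAt.sub (dg3 hz).hasDerivAt).deriv,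
    (((df3 hz).hasDerivAt.const_mul I).neg).deriv,
    ((((df2 hz).hasDerivAt.const_mul I).const_mul 3).sub ((dg3 hz).hasDerivAt.const_mul I)).deriv]
  simp only [Complex.add_im, Complex.sub_im, Complex.neg_im, Complex.mul_im, Complex.mul_re,
    Complex.conj_re, Complex.conj_im, Complex.I_re, Complex.I_im, Complex.neg_re, Complex.sub_re,
    Complex.add_re]
  norm_num
  ring
end

section
/- Let U ⊆ ℂ be an open set, μ > 0, and let f, g : ℂ → ℂ be complex differentiable on U (holomorphic) with complex derivatives f′, g′. Define real-valued functions on U by u(z) = Re(−conj(f(z)) + conj(z) f′(z) + g′(z)), v(z) = −Im(−conj(f(z)) + conj(z) f′(z) + g′(z)), and p(z) = 4μ·Re(f′(z)). Then on U, viewing these as functions of x = Re z and y = Im z: (i) ∂u/∂x + ∂v/∂y = 0 (incompressibility); (ii) μ(∂²u/∂x² + ∂²u/∂y²) = ∂p/∂x and μ(∂²v/∂x² + ∂²v/∂y²) = ∂p/∂y (Stokes momentum equations); and (iii) the vorticity satisfies ∂v/∂x − ∂u/∂y = −4·Im(f′(z)). Thus the Goursat representation u − iv = −conj(f) + conj(z)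 f′ + g′, p/μ − iω = 4f′ produces a solution of the steady Stokes equations. -/
open Complex

lemma holo_next {U : Set ℂ} (hU : IsOpen U) {F F' : ℂ → ℂ}
    (hF : ∀ z ∈ U, HasDerivAt F (F' z) z) :
    ∀ z ∈ U, HasDerivAt F' (deriv F' z) z := by
  have hd : DifferentiableOn ℂ F U := fun z hz =>
    ((hF z hz).differentiableAt).differentiableWithinAt
  have han : AnalyticOnNhd ℂ (deriv F) U := (hd.analyticOnNhd hU).deriv
  intro z hz
  have heq : F' =ᶠ[nhds z] deriv F := by
    filter_upwards [hU.mem_nhds hz] with w hw using ((hF w hw).deriv).symm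
  have h1 : HasDerivAt (deriv F) (deriv (deriv F) z) z :=
    ((han z hz).differentiableAt).hasDerivAt
  rw [heq.deriv_eq]
  exact h1.congr_of_eventuallyEq heq

lemma key (U : Set ℂ) (hU : IsOpen U)
    (F F₁ G G₁ H H₁ K K₁ : ℂ → ℂ)
    (hF : ∀ z ∈ U, HasDerivAt F (F₁ z) z)
    (hG : ∀ z ∈ U, HasDerivAt G (G₁ z) z)
    (hH : ∀ z ∈ U, HasDerivAt H (H₁ z) z)
    (hK : ∀ z ∈ U, HasDerivAt K (K₁ z) z)
    (a b c d : ℂ) (r : ℂ → ℝ)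
    (hr : ∀ w ∈ U, r w = (a * (starRingEnd ℂ) (F w) + b * (starRingEnd ℂ) w * G w
      + c * H w + d * K w).re)
    (z : ℂ) (hz : z ∈ U) (t : ℂ) :
    fderiv ℝ r z t = (a * (starRingEnd ℂ) (F₁ z * t) + b * (starRingEnd ℂ) t * G z
      + b * (starRingEnd ℂ) z * (G₁ z * t) + c * (H₁ z * t) + d * (K₁ z * t)).re := by
  set J : ℂ →L[ℝ] ℂ := Complex.conjCLE.toContinuousLinearMap with hJdef
  have hJapp : ∀ w : ℂ, J w = (starRingEnd ℂ) w := fun w => rfl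
  have hconjAt : ∀ y : ℂ, HasFDerivAt (fun w : ℂ => (starRingEnd ℂ) w) J y := by
    intro y
    exact (Complex.conjCLE.hasFDerivAt).congr_of_eventuallyEq
      (Filter.Eventually.of_forall fun w => rfl)
  have DF := ((hF z hz).hasFDerivAt).restrictScalars ℝ
  have DG := ((hG z hz).hasFDerivAt).restrictScalars ℝ
  have DH := ((hH z hz).hasFDerivAt).restrictScalars ℝ
  have DK := ((hK z hz).hasFDerivAt).restrictScalars ℝ
  have h1 := (HasFDerivAt.comp z (hconjAt (F z)) DF).const_mul a
  have h2 := ((hconjAt z).mul DG).const_mul b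
  have h3 := DH.const_mul c
  have h4 := DK.const_mul d
  have hW := ((h1.add h2).add h3).add h4
  have hre := (Complex.reCLM.hasFDerivAt).comp z hW
  have hr' : r =ᶠ[nhds z] fun w =>
      (a * ((fun w : ℂ => (starRingEnd ℂ) w) ∘ F) w + b * ((starRingEnd ℂ) w * G w)
        + c * H w + d * K w).re := by
    filter_upwards [hU.mem_nhds hz] with w hw
    rw [hr w hw]; simp only [Function.comp_apply]; congr 1; ring
  have hfin := hre.congr_of_eventuallyEq hr'
  rw [hfin.fderiv]
  simp only [ContinuousLinearMap.coe_comp', Function.comp_apply,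
    ContinuousLinearMap.add_apply, ContinuousLinearMap.coe_smul', Pi.smul_apply,
    ContinuousLinearMap.coe_restrictScalars', ContinuousLinearMap.smulRight_apply,
    ContinuousLinearMap.one_apply, smul_eq_mul, Complex.reCLM_apply, hJapp, map_mul,
      ContinuousLinearMap.toSpanSingleton_apply]
  congr 1; ring

/-- The Goursat representation `u − iv = −conj(f) + conj(z) f′ + g′`,
`p = 4μ Re f′` produces a solution of the steady Stokes equations, with
vorticity `ω = ∂v/∂x − ∂u/∂y = −4 Im f′`. -/
theorem goursat_solves_stokes
    (U : Set ℂ) (hU : IsOpen U) (μ : ℝ) (hμ : 0 < μ)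
    (f g f' g' : ℂ → ℂ)
    (hf : ∀ z ∈ U, HasDerivAt f (f' z) z) (hg : ∀ z ∈ U, HasDerivAt g (g' z) z)
    (u v p : ℂ → ℝ)
    (hu : ∀ z ∈ U, u z = (-(starRingEnd ℂ) (f z) + (starRingEnd ℂ) z * f' z + g' z).re)
    (hv : ∀ z ∈ U, v z = -(-(starRingEnd ℂ) (f z) + (starRingEnd ℂ) z * f' z + g' z).im)
    (hp : ∀ z ∈ U, p z = 4 * μ * (f' z).re) :
    ∀ z ∈ U,
      (pdx u z + pdy v z = 0) ∧
      (μ * (pdx (pdx u) z + pdy (pdy u) z) = pdx p z) ∧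
      (μ * (pdx (pdx v) z + pdy (pdy v) z) = pdy p z) ∧
      (pdx v z - pdy u z = -4 * (f' z).im) := by
  have hf2 : ∀ z ∈ U, HasDerivAt f' (deriv f' z) z := holo_next hU hf
  have hg2 : ∀ z ∈ U, HasDerivAt g' (deriv g' z) z := holo_next hU hg
  set f2 := deriv f' with hf2def
  set g2 := deriv g' with hg2def
  have hf3 : ∀ z ∈ U, HasDerivAt f2 (deriv f2 z) z := holo_next hU hf2
  have hg3 : ∀ z ∈ U, HasDerivAt g2 (deriv g2 z) z := holo_next hU hg2
  set f3 := deriv f2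
  set g3 := deriv g2
  -- canonical shapes
  have hrU_u : ∀ w ∈ U, u w = ((-1 : ℂ) * (starRingEnd ℂ) (f w)
      + 1 * (starRingEnd ℂ) w * f' w + 1 * g' w + 0 * f' w).re := by
    intro w hw; rw [hu w hw]; congr 1; ring
  have hrU_v : ∀ w ∈ U, v w = ((-I) * (starRingEnd ℂ) (f w)
      + I * (starRingEnd ℂ) w * f' w + I * g' w + 0 * f' w).re := by
    intro w hw; rw [hv w hw]
    simp only [Complex.add_re, Complex.add_im, Complex.neg_re, Complex.neg_im,
      Complex.mul_re, Complex.mul_im, Complex.I_re, Complex.I_im, Complex.re_ofNat, Complex.im_ofNat, Complex.conj_re,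
      Complex.conj_im, Complex.zero_re, Complex.zero_im]
    ring
  have hrU_p : ∀ w ∈ U, p w = ((0 : ℂ) * (starRingEnd ℂ) (f w)
      + 0 * (starRingEnd ℂ) w * f' w + ((4 * μ : ℝ) : ℂ) * f' w + 0 * f' w).re := by
    intro w hw; rw [hp w hw]
    simp [Complex.add_re, Complex.mul_re, Complex.ofReal_re, Complex.ofReal_im]
  intro z hz
  -- first derivatives, in canonical shape on U
  have hpdxu : ∀ w ∈ U, pdx u w = ((0 : ℂ) * (starRingEnd ℂ) (f w)
      + 1 * (starRingEnd ℂ) w * f2 w + 1 * g2 w + 0 * f' w).re := by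
    intro w hw
    show fderiv ℝ u w 1 = _
    rw [key U hU f f' f' f2 g' g2 f' f2 hf hf2 hg2 hf2 (-1) 1 1 0 u hrU_u w hw 1]
    simp only [Complex.add_re, Complex.mul_re, Complex.mul_im, Complex.add_im,
      Complex.neg_re, Complex.neg_im, Complex.conj_re, Complex.conj_im,
      Complex.one_re, Complex.one_im, Complex.zero_re, Complex.zero_im, map_one, map_mul]
    ring
  have hpdyu : ∀ w ∈ U, pdy u w = ((0 : ℂ) * (starRingEnd ℂ) (f w)
      + I * (starRingEnd ℂ) w * f2 w + I * g2 w + (-2 * I) * f' w).re := by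
    intro w hw
    show fderiv ℝ u w I = _
    rw [key U hU f f' f' f2 g' g2 f' f2 hf hf2 hg2 hf2 (-1) 1 1 0 u hrU_u w hw I]
    simp only [Complex.add_re, Complex.mul_re, Complex.mul_im, Complex.add_im,
      Complex.neg_re, Complex.neg_im, Complex.conj_re, Complex.conj_im,
      Complex.one_re, Complex.one_im, Complex.zero_re, Complex.zero_im,
      Complex.I_re, Complex.I_im, Complex.re_ofNat, Complex.im_ofNat, map_mul, Complex.conj_I]
    ring
  have hpdxv : ∀ w ∈ U, pdx v w = ((0 : ℂ) * (starRingEnd ℂ) (f w)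
      + I * (starRingEnd ℂ) w * f2 w + I * g2 w + (2 * I) * f' w).re := by
    intro w hw
    show fderiv ℝ v w 1 = _
    rw [key U hU f f' f' f2 g' g2 f' f2 hf hf2 hg2 hf2 (-I) I I 0 v hrU_v w hw 1]
    simp only [Complex.add_re, Complex.mul_re, Complex.mul_im, Complex.add_im,
      Complex.neg_re, Complex.neg_im, Complex.conj_re, Complex.conj_im,
      Complex.one_re, Complex.one_im, Complex.zero_re, Complex.zero_im,
      Complex.I_re, Complex.I_im, Complex.re_ofNat, Complex.im_ofNat, map_one, map_mul]
    ring
  have hpdyv : ∀ w ∈ U, pdy v w = ((0 : ℂ) * (starRingEnd ℂ) (f w)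
      + (-1) * (starRingEnd ℂ) w * f2 w + (-1) * g2 w + 0 * f' w).re := by
    intro w hw
    show fderiv ℝ v w I = _
    rw [key U hU f f' f' f2 g' g2 f' f2 hf hf2 hg2 hf2 (-I) I I 0 v hrU_v w hw I]
    simp only [Complex.add_re, Complex.mul_re, Complex.mul_im, Complex.add_im,
      Complex.neg_re, Complex.neg_im, Complex.conj_re, Complex.conj_im,
      Complex.one_re, Complex.one_im, Complex.zero_re, Complex.zero_im,
      Complex.I_re, Complex.I_im, Complex.re_ofNat, Complex.im_ofNat, map_mul, Complex.conj_I]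
    ring
  -- second derivatives at z
  have h2xu : pdx (pdx u) z = ((0 : ℂ) * (starRingEnd ℂ) (f' z * 1) + 1 * (starRingEnd ℂ) 1 * f2 z
      + 1 * (starRingEnd ℂ) z * (f3 z * 1) + 1 * (g3 z * 1) + 0 * (f2 z * 1)).re := by
    show fderiv ℝ (pdx u) z 1 = _
    exact key U hU f f' f2 f3 g2 g3 f' f2 hf hf3 hg3 hf2 0 1 1 0 (pdx u) hpdxu z hz 1
  have h2yu : pdy (pdy u) z = ((0 : ℂ) * (starRingEnd ℂ) (f' z * I) + I * (starRingEnd ℂ) I * f2 z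
      + I * (starRingEnd ℂ) z * (f3 z * I) + I * (g3 z * I) + (-2 * I) * (f2 z * I)).re := by
    show fderiv ℝ (pdy u) z I = _
    exact key U hU f f' f2 f3 g2 g3 f' f2 hf hf3 hg3 hf2 0 I I (-2 * I) (pdy u) hpdyu z hz I
  have h2xv : pdx (pdx v) z = ((0 : ℂ) * (starRingEnd ℂ) (f' z * 1) + I * (starRingEnd ℂ) 1 * f2 z
      + I * (starRingEnd ℂ) z * (f3 z * 1) + I * (g3 z * 1) + (2 * I) * (f2 z * 1)).re := by
    show fderiv ℝ (pdx v) z 1 = _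
    exact key U hU f f' f2 f3 g2 g3 f' f2 hf hf3 hg3 hf2 0 I I (2 * I) (pdx v) hpdxv z hz 1
  have h2yv : pdy (pdy v) z = ((0 : ℂ) * (starRingEnd ℂ) (f' z * I) + (-1) * (starRingEnd ℂ) I * f2 z
      + (-1) * (starRingEnd ℂ) z * (f3 z * I) + (-1) * (g3 z * I) + 0 * (f2 z * I)).re := by
    show fderiv ℝ (pdy v) z I = _
    exact key U hU f f' f2 f3 g2 g3 f' f2 hf hf3 hg3 hf2 0 (-1) (-1) 0 (pdy v) hpdyv z hz I
  have hxp : pdx p z = ((0 : ℂ) * (starRingEnd ℂ) (f' z * 1) + 0 * (starRingEnd ℂ) 1 * f' z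
      + 0 * (starRingEnd ℂ) z * (f2 z * 1) + ((4 * μ : ℝ) : ℂ) * (f2 z * 1) + 0 * (f2 z * 1)).re := by
    show fderiv ℝ p z 1 = _
    exact key U hU f f' f' f2 f' f2 f' f2 hf hf2 hf2 hf2 0 0 ((4 * μ : ℝ) : ℂ) 0 p
      hrU_p z hz 1
  have hyp : pdy p z = ((0 : ℂ) * (starRingEnd ℂ) (f' z * I) + 0 * (starRingEnd ℂ) I * f' z
      + 0 * (starRingEnd ℂ) z * (f2 z * I) + ((4 * μ : ℝ) : ℂ) * (f2 z * I) + 0 * (f2 z * I)).re := by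
    show fderiv ℝ p z I = _
    exact key U hU f f' f' f2 f' f2 f' f2 hf hf2 hf2 hf2 0 0 ((4 * μ : ℝ) : ℂ) 0 p
      hrU_p z hz I
  refine ⟨?_, ?_, ?_, ?_⟩
  · rw [hpdxu z hz, hpdyv z hz]
    simp only [Complex.add_re, Complex.mul_re, Complex.mul_im, Complex.add_im,
      Complex.neg_re, Complex.neg_im, Complex.conj_re, Complex.conj_im,
      Complex.one_re, Complex.one_im, Complex.zero_re, Complex.zero_im,
      Complex.I_re, Complex.I_im, Complex.re_ofNat, Complex.im_ofNat]
    ring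
  · rw [h2xu, h2yu, hxp]
    simp only [Complex.add_re, Complex.mul_re, Complex.mul_im, Complex.add_im,
      Complex.neg_re, Complex.neg_im, Complex.conj_re, Complex.conj_im,
      Complex.one_re, Complex.one_im, Complex.zero_re, Complex.zero_im,
      Complex.I_re, Complex.I_im, Complex.re_ofNat, Complex.im_ofNat, Complex.ofReal_re, Complex.ofReal_im,
      map_one, map_mul, Complex.conj_I]
    ring
  · rw [h2xv, h2yv, hyp]
    simp only [Complex.add_re, Complex.mul_re, Complex.mul_im, Complex.add_im,
      Complex.neg_re, Complex.neg_im, Complex.conj_re, Complex.conj_im,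
      Complex.one_re, Complex.one_im, Complex.zero_re, Complex.zero_im,
      Complex.I_re, Complex.I_im, Complex.re_ofNat, Complex.im_ofNat, Complex.ofReal_re, Complex.ofReal_im,
      map_one, map_mul, Complex.conj_I]
    ring
  · rw [hpdxv z hz, hpdyu z hz]
    simp only [Complex.add_re, Complex.mul_re, Complex.mul_im, Complex.add_im,
      Complex.neg_re, Complex.neg_im, Complex.conj_re, Complex.conj_im,
      Complex.one_re, Complex.one_im, Complex.zero_re, Complex.zero_im,
      Complex.I_re, Complex.I_im, Complex.re_ofNat, Complex.im_ofNat]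
    ring
end
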